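/- arXiv:math/0608017 — 2 statements merged into one kernel-verified Lean document; each statement's English description precedes it below -/
import Mathlib

section
/- (Uniqueness of zero components of Lasso solutions.) Let X ∈ ℝ^{n×p}, a ∈ {1,…,p}, A ⊆ {1,…,p}\{a}, λ > 0, and let G_b(θ) = −2n⁻¹⟨X_a − Xθ, X_b⟩. If θ̂ is a minimizer of n⁻¹‖X_a − Xθ‖₂² + λ‖θ‖₁ over {θ ∈ ℝ^p : θ_k = 0 for all k ∉ A} and |G_b(θ̂)| < λ (strict inequality) for some b ∈ A, then every minimizer θ' of the same problem satisfies θ'_b = 0. -/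
set_option autoImplicit false

open MeasureTheory ProbabilityTheory Real Filter Finset

noncomputable section

namespace MB

/-- The population prediction risk `E (X_a - ∑ k, θ k * X k)^2` for `X ~ N(0, S)`,
written in terms of the covariance matrix `S`. -/
def popRisk {q : ℕ} (S : Matrix (Fin q) (Fin q) ℝ) (a : Fin q) (θ : Fin q → ℝ) : ℝ :=
  S a a - 2 * ∑ k, θ k * S a k + ∑ k, ∑ l, θ k * S k l * θ l

/-- `θ` minimizes the population risk among vectors supported on `A`. -/
def IsPopMin {q : ℕ} (S : Matrix (Fin q) (Fin q) ℝ) (a : Fin q) (A : Set (Fin q))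
    (θ : Fin q → ℝ) : Prop :=
  (∀ k, k ∉ A → θ k = 0) ∧
    ∀ θ' : Fin q → ℝ, (∀ k, k ∉ A → θ' k = 0) → popRisk S a θ ≤ popRisk S a θ'

/-- The neighborhood of node `a` : nodes `b ≠ a` with a nonzero entry `K_{ab}` of the
inverse covariance matrix `K = S⁻¹`. -/
def neigh {q : ℕ} (S : Matrix (Fin q) (Fin q) ℝ) (a : Fin q) : Finset (Fin q) :=
  Finset.univ.filter fun b => b ≠ a ∧ S⁻¹ a b ≠ 0

/-- Optimal coefficients `θ^a` for prediction of `X_a` from all remaining variables: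
`θ^a_b = - K_{ab} / K_{aa}`. -/
def thetaA {q : ℕ} (S : Matrix (Fin q) (Fin q) ℝ) (a : Fin q) : Fin q → ℝ := fun b =>
  if b = a then 0 else -(S⁻¹ a b) / S⁻¹ a a

/-- Partial correlation `π_{ab} = - K_{ab} / sqrt (K_{aa} K_{bb})`. -/
def parcor {q : ℕ} (S : Matrix (Fin q) (Fin q) ℝ) (a b : Fin q) : ℝ :=
  -(S⁻¹ a b) / Real.sqrt (S⁻¹ a a * S⁻¹ b b)

/-- `S_a(b) = ∑_{k ∈ ne_a} sign (θ^{a,ne_a}_k) * θ^{b,ne_a}_k`, where `θp c A` denotes the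
population coefficient vector `θ^{c,A}`. -/
def Sfun {q : ℕ} (S : Matrix (Fin q) (Fin q) ℝ)
    (θp : Fin q → Set (Fin q) → Fin q → ℝ) (a b : Fin q) : ℝ :=
  ∑ k ∈ neigh S a,
    Real.sign (θp a (neigh S a : Set (Fin q)) k) * θp b (neigh S a : Set (Fin q)) k

/-- The empirical Lasso objective `n⁻¹ ‖X_a - X θ‖₂² + λ ‖θ‖₁`. -/
def lassoObj {n q : ℕ} (X : Fin n → Fin q → ℝ) (a : Fin q) (lam : ℝ) (θ : Fin q → ℝ) : ℝ :=
  (n : ℝ)⁻¹ * ∑ i, (X i a - ∑ k, X i k * θ k) ^ 2 + lam * ∑ k, |θ k|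

/-- `θ` is a Lasso solution with support restricted to `A`. -/
def IsLasso {n q : ℕ} (X : Fin n → Fin q → ℝ) (a : Fin q) (A : Set (Fin q)) (lam : ℝ)
    (θ : Fin q → ℝ) : Prop :=
  (∀ k, k ∉ A → θ k = 0) ∧
    ∀ θ' : Fin q → ℝ, (∀ k, k ∉ A → θ' k = 0) → lassoObj X a lam θ ≤ lassoObj X a lam θ'

/-- `θ` is a Lasso solution with support restricted to `A` and with coordinate `b`
pinned to the value `β`. -/
def IsLassoPinned {n q : ℕ} (X : Fin n → Fin q → ℝ) (a : Fin q) (A : Set (Fin q))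
    (b : Fin q) (β lam : ℝ) (θ : Fin q → ℝ) : Prop :=
  θ b = β ∧ (∀ k, k ∉ A → θ k = 0) ∧
    ∀ θ' : Fin q → ℝ, (θ' b = β ∧ ∀ k, k ∉ A → θ' k = 0) →
      lassoObj X a lam θ ≤ lassoObj X a lam θ'

/-- The gradient component `G_b(θ) = -2 n⁻¹ ⟨X_a - X θ, X_b⟩` of the quadratic part of
the Lasso objective. -/
def grad {n q : ℕ} (X : Fin n → Fin q → ℝ) (a : Fin q) (θ : Fin q → ℝ) (b : Fin q) : ℝ :=
  -2 * (n : ℝ)⁻¹ * ∑ i, (X i a - ∑ k, X i k * θ k) * X i b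

/-- `ν` is the centered Gaussian measure on `ℝ^q` with covariance matrix `S`,
characterized through its one-dimensional projections. -/
def IsGaussian {q : ℕ} (S : Matrix (Fin q) (Fin q) ℝ) (ν : Measure (Fin q → ℝ)) : Prop :=
  IsProbabilityMeasure ν ∧
    ∀ u : Fin q → ℝ,
      ν.map (fun x => ∑ i, u i * x i) =
        gaussianReal 0 (Real.toNNReal (∑ i, ∑ j, u i * S i j * u j))

/-- The standard normal c.d.f. `Φ`. -/
def stdGaussCdf (z : ℝ) : ℝ := ((gaussianReal 0 1) (Set.Iic z)).toReal

/-- The upper quantile function `Φ̃⁻¹` with `Φ̃ = 1 - Φ`. -/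
def upperQuantile (q : ℝ) : ℝ := sInf {z : ℝ | 1 - stdGaussCdf z ≤ q}

end MB

/-!
Two Lasso solutions have the same fitted values `X θ`: the squared loss is strictly convex in
them and the penalty is convex, so otherwise their midpoint would do strictly better. Since
`G_b(θ)` depends on `θ` only through `X θ`, all solutions share the gradient. At a solution
`θ'` with `θ'_b ≠ 0` the objective is differentiable along the `b`-th coordinate, and
first-order optimality forces `G_b(θ') = -λ sign θ'_b`, so `|G_b(θ̂)| = |G_b(θ')| = λ`.
-/

lemma abs_sign_cast_of_ne_zero {α : Type*} [Ring α] [LinearOrder α] [IsStrictOrderedRing α]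
    {x : α} (hx : x ≠ 0) : |(SignType.sign x : α)| = 1 := by
  rcases hx.lt_or_gt with hx | hx <;> simp [hx]

namespace MB

variable {n q : ℕ} (X : Fin n → Fin q → ℝ) (a : Fin q)

def fit (θ : Fin q → ℝ) (i : Fin n) : ℝ := ∑ k, X i k * θ k

lemma lassoObj_eq_fit (lam : ℝ) (θ : Fin q → ℝ) :
    lassoObj X a lam θ = (n : ℝ)⁻¹ * ∑ i, (X i a - fit X θ i) ^ 2 + lam * ∑ k, |θ k| := rfl

lemma grad_eq_fit (θ : Fin q → ℝ) (b : Fin q) :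
    grad X a θ b = -2 * (n : ℝ)⁻¹ * ∑ i, (X i a - fit X θ i) * X i b := rfl

lemma grad_congr_of_fit_eq {θ θ' : Fin q → ℝ} (h : fit X θ = fit X θ') (b : Fin q) :
    grad X a θ b = grad X a θ' b := by
  rw [grad_eq_fit, grad_eq_fit, h]

lemma fit_midpoint (θ θ' : Fin q → ℝ) (i : Fin n) :
    fit X (fun k => (θ k + θ' k) / 2) i = (fit X θ i + fit X θ' i) / 2 := by
  simp only [fit, ← Finset.sum_add_distrib, Finset.sum_div]
  exact Finset.sum_congr rfl fun k _ => by ring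

lemma lassoObj_midpoint_le {lam : ℝ} (hlam : 0 ≤ lam) (θ θ' : Fin q → ℝ) :
    lassoObj X a lam (fun k => (θ k + θ' k) / 2) ≤
      (lassoObj X a lam θ + lassoObj X a lam θ') / 2 -
        (n : ℝ)⁻¹ * ∑ i, ((fit X θ i - fit X θ' i) / 2) ^ 2 := by
  have hquad : ∑ i, (X i a - fit X (fun k => (θ k + θ' k) / 2) i) ^ 2 =
      (∑ i, (X i a - fit X θ i) ^ 2 + ∑ i, (X i a - fit X θ' i) ^ 2) / 2 -
        ∑ i, ((fit X θ i - fit X θ' i) / 2) ^ 2 := by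
    simp only [fit_midpoint, ← Finset.sum_add_distrib, Finset.sum_div, ← Finset.sum_sub_distrib]
    exact Finset.sum_congr rfl fun i _ => by ring
  have hl1 : ∑ k, |(θ k + θ' k) / 2| ≤ (∑ k, |θ k| + ∑ k, |θ' k|) / 2 := by
    rw [← Finset.sum_add_distrib, Finset.sum_div]
    refine Finset.sum_le_sum fun k _ => ?_
    rw [abs_div, abs_two]
    linarith [abs_add_le (θ k) (θ' k)]
  rw [lassoObj_eq_fit, lassoObj_eq_fit, lassoObj_eq_fit, hquad]
  nlinarith [mul_le_mul_of_nonneg_left hl1 hlam]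

lemma IsLasso.fit_eq {A : Set (Fin q)} {lam : ℝ} (hlam : 0 ≤ lam) {θ θ' : Fin q → ℝ}
    (h : IsLasso X a A lam θ) (h' : IsLasso X a A lam θ') : fit X θ = fit X θ' := by
  rcases Nat.eq_zero_or_pos n with rfl | hn
  · exact funext fun i => i.elim0
  have hmid := h.2 (fun k => (θ k + θ' k) / 2) fun k hk => by simp [h.1 k hk, h'.1 k hk]
  have hobj : lassoObj X a lam θ = lassoObj X a lam θ' := le_antisymm (h.2 θ' h'.1) (h'.2 θ h.1)
  have hsq : ∑ i, ((fit X θ i - fit X θ' i) / 2) ^ 2 ≤ 0 := by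
    have hconv := lassoObj_midpoint_le X a hlam θ θ'
    have hn' : (0 : ℝ) < (n : ℝ)⁻¹ := by positivity
    nlinarith
  funext i
  have hi := (Finset.sum_eq_zero_iff_of_nonneg fun i _ => sq_nonneg _).mp
    (le_antisymm hsq (Finset.sum_nonneg fun i _ => sq_nonneg _)) i (Finset.mem_univ i)
  linarith [pow_eq_zero_iff (n := 2) two_ne_zero |>.mp hi]

lemma fit_update_add (θ : Fin q → ℝ) (b : Fin q) (t : ℝ) (i : Fin n) :
    fit X (Function.update θ b (θ b + t)) i = fit X θ i + t * X i b := by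
  have : Function.update θ b (θ b + t) = θ + Pi.single b t := by
    ext k; by_cases hk : k = b <;> simp [hk, Function.update_of_ne]
  simp [fit, this, mul_add, Finset.sum_add_distrib, Pi.single_apply, mul_comm]

lemma lassoObj_update_add (lam : ℝ) (θ : Fin q → ℝ) (b : Fin q) (t : ℝ) :
    lassoObj X a lam (Function.update θ b (θ b + t)) =
      lassoObj X a lam θ + t * grad X a θ b + t ^ 2 * ((n : ℝ)⁻¹ * ∑ i, X i b ^ 2) +
        lam * (|θ b + t| - |θ b|) := by
  have hl1 : ∑ k, |Function.update θ b (θ b + t) k| = ∑ k, |θ k| + (|θ b + t| - |θ b|) := by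
    rw [← Finset.add_sum_erase _ _ (Finset.mem_univ b),
      ← Finset.add_sum_erase _ (fun k => |θ k|) (Finset.mem_univ b),
      Finset.sum_congr rfl fun k hk => by rw [Function.update_of_ne (Finset.ne_of_mem_erase hk)],
      Function.update_self]
    ring
  have hquad : ∑ i, (X i a - (fit X θ i + t * X i b)) ^ 2 =
      ∑ i, (X i a - fit X θ i) ^ 2 - 2 * t * ∑ i, (X i a - fit X θ i) * X i b +
        t ^ 2 * ∑ i, X i b ^ 2 := by
    rw [Finset.mul_sum, Finset.mul_sum, ← Finset.sum_sub_distrib, ← Finset.sum_add_distrib]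
    exact Finset.sum_congr rfl fun i _ => by ring
  rw [lassoObj_eq_fit, lassoObj_eq_fit, grad_eq_fit, hl1]
  simp only [fit_update_add, hquad]
  ring

lemma IsLasso.abs_grad_eq {A : Set (Fin q)} {lam : ℝ} {θ : Fin q → ℝ}
    (h : IsLasso X a A lam θ) {b : Fin q} (hb : b ∈ A) (hθb : θ b ≠ 0) :
    |grad X a θ b| = |lam| := by
  set f : ℝ → ℝ := fun t => lassoObj X a lam (Function.update θ b (θ b + t))
  have hmin : IsLocalMin f 0 := Filter.Eventually.of_forall fun t => by
    refine (le_of_eq (by simp [f])).trans (h.2 _ fun k hk => ?_)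
    rw [Function.update_of_ne (ne_of_mem_of_not_mem hb hk).symm, h.1 k hk]
  have hderiv : HasDerivAt f (grad X a θ b + lam * SignType.sign (θ b)) 0 := by
    have habs := (hasDerivAt_abs (by simpa using hθb)).comp_const_add (θ b) 0
    rw [show f = _ from funext (lassoObj_update_add X a lam θ b)]
    refine ((((hasDerivAt_id' (x := (0 : ℝ))).mul_const (grad X a θ b)).const_add
      (lassoObj X a lam θ)).fun_add ((hasDerivAt_pow 2 (0 : ℝ)).mul_const
        ((n : ℝ)⁻¹ * ∑ i, X i b ^ 2))).fun_add ((habs.sub_const |θ b|).const_mul lam)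
      |>.congr_deriv ?_
    simp
  rw [eq_neg_of_add_eq_zero_left (hmin.hasDerivAt_eq_zero hderiv), abs_neg, abs_mul,
    abs_sign_cast_of_ne_zero hθb, mul_one]

end MB

theorem lemmaA1_zero_components_unique_general
    (n P : ℕ) (X : Fin n → Fin P → ℝ) (a : Fin P)
    (A : Set (Fin P))
    (lam : ℝ)
    (θhat : Fin P → ℝ) (hmin : MB.IsLasso X a A lam θhat)
    (b : Fin P) (hb : b ∈ A) (hG : |MB.grad X a θhat b| < lam) :
    ∀ θ' : Fin P → ℝ, MB.IsLasso X a A lam θ' → θ' b = 0 := by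
  intro θ' hθ'
  by_contra hθ'b
  have hfit := hmin.fit_eq X a ((abs_nonneg _).trans hG.le) hθ'
  rw [MB.grad_congr_of_fit_eq X a hfit, hθ'.abs_grad_eq X a hb hθ'b] at hG
  exact (le_abs_self lam).not_gt hG

/-- **Lemma A.1, second part (uniqueness of zero components of Lasso solutions).** If some
Lasso minimizer `θ̂` restricted to `A` has `|G_b(θ̂)| < λ` for some `b ∈ A`, then every
minimizer of the same problem vanishes at `b`. -/
theorem lemmaA1_zero_components_unique
    (n P : ℕ) (X : Fin n → Fin P → ℝ) (a : Fin P)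
    (A : Set (Fin P)) (ha : a ∉ A)
    (lam : ℝ) (hlam : 0 < lam)
    (θhat : Fin P → ℝ) (hmin : MB.IsLasso X a A lam θhat)
    (b : Fin P) (hb : b ∈ A) (hG : |MB.grad X a θhat b| < lam) :
    ∀ θ' : Fin P → ℝ, MB.IsLasso X a A lam θ' → θ' b = 0 :=
  lemmaA1_zero_components_unique_general n P X a A lam θhat hmin b hb hG
end
end

section
/- (Gradient identity on the sign-agreement event.) Let Σ be a p×p positive definite matrix with X ~ N(0,Σ), fix a node a with neighborhood ne_a, let X ∈ ℝ^{n×p} be any data matrix with columns X_1,…,X_p, and let λ > 0. Suppose θ̂ is a minimizer of n⁻¹‖X_a − Xθ‖₂² + λ‖θ‖₁ over {θ ∈ ℝ^p : θ_k = 0 for all k ∉ ne_a} such that sign(θ̂_k) = sign(θ^{a,ne_a}_k) for all k ∈ ne_a (in particular θ̂_k ≠ 0 for k ∈ ne_a, since θ^{a,ne_a}_k ≠ 0 there). For b ∉ ne_a ∪ {a}, define the column vector V_b = X_b − Σ_{m ∈ ne_a} θ^{b,ne_a}_m X_m. Then the gradient component at b satisfies the exact identity G_b(θ̂) = −S_a(b)·λ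 − 2n⁻¹⟨X_a − Xθ̂, V_b⟩, where G_b(θ) = −2n⁻¹⟨X_a − Xθ, X_b⟩ and S_a(b) = Σ_{m ∈ ne_a} sign(θ^{a,ne_a}_m) θ^{b,ne_a}_m. -/
set_option autoImplicit false

open MeasureTheory ProbabilityTheory Real Filter Finset

noncomputable section

/-!
Write `K = Σ⁻¹`. The vector `-K_{a·}/K_{aa}` vanishes off `ne_a` and satisfies the normal
equations `(Σθ)_k = Σ_{ak}` for `k ≠ a`; since the population risk exceeds its value there by
the positive definite form `dᵀΣd` in the deviation `d`, it is the population minimizer over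
`ne_a`. Hence `θ^{a,ne_a}` is nonzero on `ne_a`, and by sign agreement so is `θ̂`. At a nonzero
coordinate the `ℓ¹` penalty is differentiable, so stationarity of the Lasso along that
coordinate gives `G_k(θ̂) = -sign(θ̂_k) λ` for `k ∈ ne_a`. The identity then follows from the
linear relation `G_b = Σ_m β_m G_m - 2n⁻¹⟨X_a - Xθ̂, X_b - Σ_m β_m X_m⟩`, applied with
`β = θ^{b,ne_a}`, which is supported in `ne_a`.
-/

lemma abs_add_eq_abs_add_sign_mul {x t : ℝ} (ht : |t| < |x|) :
    |x + t| = |x| + Real.sign x * t := by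
  rcases lt_trichotomy x 0 with hx | rfl | hx
  · rw [abs_of_neg hx] at ht ⊢
    rw [abs_of_neg (by linarith [le_abs_self t]), Real.sign_of_neg hx]
    ring
  · simp only [abs_zero] at ht
    linarith [abs_nonneg t]
  · rw [abs_of_pos hx] at ht ⊢
    rw [abs_of_pos (by linarith [neg_abs_le t]), Real.sign_of_pos hx]
    ring

lemma linear_coeff_eq_zero_of_local_nonneg {c d ε : ℝ} (hε : 0 < ε)
    (h : ∀ t, |t| < ε → 0 ≤ c * t + d * t ^ 2) : c = 0 := by
  have hmin : IsLocalMin (fun t => c * t + d * t ^ 2) 0 := by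
    filter_upwards [Metric.ball_mem_nhds 0 hε] with t ht
    simpa using h t (by simpa using ht)
  have hderiv : HasDerivAt (fun t => c * t + d * t ^ 2) c 0 := by
    simpa using ((hasDerivAt_id' (0 : ℝ)).const_mul c).fun_add ((hasDerivAt_pow 2 0).const_mul d)
  exact hmin.hasDerivAt_eq_zero hderiv

namespace MB

open Matrix

section Population

variable {q : ℕ} {S : Matrix (Fin q) (Fin q) ℝ} {a : Fin q}

lemma popRisk_eq_dotProduct (θ : Fin q → ℝ) :
    popRisk S a θ = S a a - 2 * (θ ⬝ᵥ S a) + θ ⬝ᵥ S *ᵥ θ := by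
  simp [popRisk, dotProduct, mulVec, Finset.mul_sum, mul_assoc]

lemma popRisk_add (hS : S.IsSymm) (τ d : Fin q → ℝ) :
    popRisk S a (τ + d) = popRisk S a τ + 2 * (d ⬝ᵥ (S *ᵥ τ - S a)) + d ⬝ᵥ S *ᵥ d := by
  have hcomm : τ ⬝ᵥ S *ᵥ d = d ⬝ᵥ S *ᵥ τ := by
    rw [dotProduct_mulVec, ← mulVec_transpose, hS.eq, dotProduct_comm]
  simp only [popRisk_eq_dotProduct, add_dotProduct, mulVec_add, dotProduct_add, dotProduct_sub,
    hcomm]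
  ring

lemma thetaA_eq_single_sub_smul (ha : S⁻¹ a a ≠ 0) :
    thetaA S a = Pi.single a 1 - (S⁻¹ a a)⁻¹ • S⁻¹ a := by
  ext b
  rcases eq_or_ne b a with rfl | hb
  · simp [thetaA, ha]
  · simp [thetaA, hb, div_eq_inv_mul]

lemma mulVec_thetaA_apply (hS : S.PosDef) {k : Fin q} (hk : k ≠ a) :
    (S *ᵥ thetaA S a) k = S a k := by
  rw [thetaA_eq_single_sub_smul hS.inv.diag_pos.ne', ← vecMul_transpose,
    (isHermitian_iff_isSymm.1 hS.isHermitian).eq, sub_vecMul, smul_vecMul,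
    ← mul_apply_eq_vecMul, nonsing_inv_mul S ((isUnit_iff_isUnit_det S).1 hS.isUnit)]
  simp [one_apply_ne hk.symm]

lemma thetaA_eq_zero_of_notMem_neigh {b : Fin q} (hb : b ∉ neigh S a) : thetaA S a b = 0 := by
  simp only [neigh, Finset.mem_filter, Finset.mem_univ, true_and, not_and_or, not_not] at hb
  rcases eq_or_ne b a with rfl | hba
  · simp [thetaA]
  · simp [thetaA, hba, hb.resolve_left hba]

lemma thetaA_ne_zero_of_mem_neigh (ha : S⁻¹ a a ≠ 0) {k : Fin q} (hk : k ∈ neigh S a) :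
    thetaA S a k ≠ 0 := by
  simp only [neigh, Finset.mem_filter, Finset.mem_univ, true_and] at hk
  simpa [thetaA, hk.1, ha] using hk.2

lemma IsPopMin.eq_thetaA {θ : Fin q → ℝ} (hmin : IsPopMin S a (neigh S a : Set (Fin q)) θ)
    (hS : S.PosDef) : θ = thetaA S a := by
  have hsupp : ∀ k ∉ neigh S a, thetaA S a k = 0 := fun k hk => thetaA_eq_zero_of_notMem_neigh hk
  set d := θ - thetaA S a with hd
  have hda : d a = 0 := by
    simp [hd, hmin.1 a (by simp [neigh]), hsupp a (by simp [neigh])]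
  have hcross : d ⬝ᵥ (S *ᵥ thetaA S a - S a) = 0 := by
    refine Finset.sum_eq_zero fun k _ => ?_
    rcases eq_or_ne k a with rfl | hk
    · simp [hda]
    · simp [mulVec_thetaA_apply hS hk]
  have hquad : d ⬝ᵥ S *ᵥ d ≤ 0 := by
    have hle := hmin.2 (thetaA S a) fun k hk => hsupp k (mt Finset.mem_coe.2 hk)
    rw [show θ = thetaA S a + d by simp [hd],
      popRisk_add (isHermitian_iff_isSymm.1 hS.isHermitian), hcross] at hle
    linarith
  by_contra hne
  have hpos := hS.dotProduct_mulVec_pos (sub_ne_zero.2 hne)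
  rw [star_trivial] at hpos
  linarith

end Population

section Lasso

variable {n q : ℕ} {X : Fin n → Fin q → ℝ} {a : Fin q}

lemma lassoObj_add_single (X : Fin n → Fin q → ℝ) (a : Fin q) (lam : ℝ) (θ : Fin q → ℝ)
    {k : Fin q} {t : ℝ} (ht : |t| < |θ k|) :
    lassoObj X a lam (θ + Pi.single k t) = lassoObj X a lam θ
      + (grad X a θ k + lam * Real.sign (θ k)) * t + ((n : ℝ)⁻¹ * ∑ i, X i k ^ 2) * t ^ 2 := by
  have hfit : ∀ i, ∑ l, X i l * (θ + Pi.single k t : Fin q → ℝ) l =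
      ∑ l, X i l * θ l + X i k * t := by
    intro i
    simp [mul_add, Finset.sum_add_distrib, Pi.single_apply]
  have hsq : ∑ i, (X i a - (∑ l, X i l * θ l + X i k * t)) ^ 2 =
      ∑ i, (X i a - ∑ l, X i l * θ l) ^ 2 - 2 * t * ∑ i, (X i a - ∑ l, X i l * θ l) * X i k
        + t ^ 2 * ∑ i, X i k ^ 2 := by
    simp only [Finset.mul_sum, ← Finset.sum_sub_distrib, ← Finset.sum_add_distrib]
    exact Finset.sum_congr rfl fun i _ => by ring
  have habs : ∀ l, |(θ + Pi.single k t : Fin q → ℝ) l| =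
      |θ l| + (Pi.single k (Real.sign (θ k) * t) : Fin q → ℝ) l := by
    intro l
    rcases eq_or_ne l k with rfl | hl
    · simp [abs_add_eq_abs_add_sign_mul ht]
    · simp [hl]
  simp only [lassoObj, grad, hfit, hsq, habs, Finset.sum_add_distrib, Finset.sum_pi_single',
    Finset.mem_univ, if_true]
  ring

lemma IsLasso.grad_eq_neg_sign_mul {A : Set (Fin q)} {lam : ℝ} {θ : Fin q → ℝ}
    (hmin : IsLasso X a A lam θ) {k : Fin q} (hk : k ∈ A) (hθk : θ k ≠ 0) :
    grad X a θ k = -Real.sign (θ k) * lam := by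
  have hnonneg : ∀ t, |t| < |θ k| →
      0 ≤ (grad X a θ k + lam * Real.sign (θ k)) * t + ((n : ℝ)⁻¹ * ∑ i, X i k ^ 2) * t ^ 2 := by
    intro t ht
    have hsupp : ∀ l ∉ A, (θ + Pi.single k t : Fin q → ℝ) l = 0 := fun l hl => by
      simp [hmin.1 l hl, (ne_of_mem_of_not_mem hk hl).symm]
    have hle := hmin.2 _ hsupp
    rw [lassoObj_add_single X a lam θ ht] at hle
    linarith
  linarith [linear_coeff_eq_zero_of_local_nonneg (abs_pos.2 hθk) hnonneg]

lemma grad_eq_sum_mul_grad_sub (X : Fin n → Fin q → ℝ) (a : Fin q) (θ : Fin q → ℝ) (b : Fin q)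
    (β : Fin q → ℝ) :
    grad X a θ b = ∑ m, β m * grad X a θ m -
      2 * (n : ℝ)⁻¹ * ∑ i, (X i a - ∑ k, X i k * θ k) * (X i b - ∑ m, β m * X i m) := by
  have hsum : ∑ m, β m * grad X a θ m =
      -2 * (n : ℝ)⁻¹ * ∑ i, (X i a - ∑ k, X i k * θ k) * ∑ m, β m * X i m := by
    simp only [grad, Finset.mul_sum]
    rw [Finset.sum_comm]
    exact Finset.sum_congr rfl fun i _ => Finset.sum_congr rfl fun m _ => by ring
  rw [hsum]
  simp only [grad, mul_sub, Finset.sum_sub_distrib]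
  ring

end Lasso

end MB

theorem gradient_identity_on_sign_event_general
    (P : ℕ) (S : Matrix (Fin P) (Fin P) ℝ) (hS : S.PosDef)
    (a : Fin P)
    (θpop : Fin P → Set (Fin P) → Fin P → ℝ)
    (hθpop : ∀ (c : Fin P) (A : Set (Fin P)), MB.IsPopMin S c A (θpop c A))
    (n : ℕ) (X : Fin n → Fin P → ℝ)
    (lam : ℝ)
    (θhat : Fin P → ℝ)
    (hmin : MB.IsLasso X a (MB.neigh S a : Set (Fin P)) lam θhat)
    (hsign : ∀ k ∈ MB.neigh S a,
      Real.sign (θhat k) = Real.sign (θpop a (MB.neigh S a : Set (Fin P)) k))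
    (b : Fin P) :
    MB.grad X a θhat b =
      -(MB.Sfun S θpop a b) * lam -
        2 * (n : ℝ)⁻¹ * ∑ i, (X i a - ∑ k, X i k * θhat k) *
          (X i b - ∑ m, θpop b (MB.neigh S a : Set (Fin P)) m * X i m) := by
  set A := MB.neigh S a
  have hkkt : ∀ k ∈ A, MB.grad X a θhat k = -Real.sign (θpop a A k) * lam := by
    intro k hk
    have hpop : θpop a A k ≠ 0 := by
      rw [(hθpop a A).eq_thetaA hS]
      exact MB.thetaA_ne_zero_of_mem_neigh hS.inv.diag_pos.ne' hk
    have hhat : θhat k ≠ 0 := fun h0 => hpop <| Real.sign_eq_zero_iff.1 <| by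
      rw [← hsign k hk, h0, Real.sign_zero]
    rw [hmin.grad_eq_neg_sign_mul (Finset.mem_coe.2 hk) hhat, hsign k hk]
  have hsupp : ∀ m ∉ A, θpop b A m = 0 := fun m hm => (hθpop b A).1 m (mt Finset.mem_coe.1 hm)
  rw [MB.grad_eq_sum_mul_grad_sub X a θhat b (θpop b A)]
  congr 1
  calc ∑ m, θpop b A m * MB.grad X a θhat m = ∑ m ∈ A, θpop b A m * MB.grad X a θhat m :=
        (Finset.sum_subset (Finset.subset_univ A) fun m _ hm => by rw [hsupp m hm, zero_mul]).symm
    _ = -MB.Sfun S θpop a b * lam := by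
        rw [MB.Sfun, neg_mul, Finset.sum_mul, ← Finset.sum_neg_distrib]
        exact Finset.sum_congr rfl fun k hk => by rw [hkkt k hk]; ring

/-- **Gradient identity on the sign-agreement event** (equation (A.30) in the paper). If a
Lasso minimizer `θ̂` restricted to `ne_a` matches the signs of the population coefficients
`θ^{a,ne_a}` on `ne_a`, then for every nonneighbor `b ∉ ne_a ∪ {a}` the gradient component
at `b` equals `-S_a(b)·λ - 2 n⁻¹ ⟨X_a - X θ̂, V_b⟩` with
`V_b = X_b - ∑_{m ∈ ne_a} θ^{b,ne_a}_m X_m`. -/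
theorem gradient_identity_on_sign_event
    (P : ℕ) (S : Matrix (Fin P) (Fin P) ℝ) (hS : S.PosDef)
    (a : Fin P)
    (θpop : Fin P → Set (Fin P) → Fin P → ℝ)
    (hθpop : ∀ (c : Fin P) (A : Set (Fin P)), MB.IsPopMin S c A (θpop c A))
    (n : ℕ) (X : Fin n → Fin P → ℝ)
    (lam : ℝ) (hlam : 0 < lam)
    (θhat : Fin P → ℝ)
    (hmin : MB.IsLasso X a (MB.neigh S a : Set (Fin P)) lam θhat)
    (hsign : ∀ k ∈ MB.neigh S a,
      Real.sign (θhat k) = Real.sign (θpop a (MB.neigh S a : Set (Fin P)) k))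
    (b : Fin P) (hba : b ≠ a) (hb : b ∉ MB.neigh S a) :
    MB.grad X a θhat b =
      -(MB.Sfun S θpop a b) * lam -
        2 * (n : ℝ)⁻¹ * ∑ i, (X i a - ∑ k, X i k * θhat k) *
          (X i b - ∑ m, θpop b (MB.neigh S a : Set (Fin P)) m * X i m) :=
  gradient_identity_on_sign_event_general P S hS a θpop hθpop n X lam θhat hmin hsign b
end
end
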